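/- arXiv:2511.06263 — 4 statements merged into one kernel-verified Lean document; each statement's English description precedes it below -/
import Mathlib

section
/- Let k be a positive integer and define functions q, S on positive reals by: q(1) = 1, S(n,1) = n, and for t > 1, q(t) = 1 + q(t - t^{1-1/k}) and S(n,t) = n + S(n - t^{1-1/k}, t - t^{1-1/k}). Then (whenever the recursions are well-founded along a decreasing sequence t₀ = t > t₁ > ... > t_m = 1 with t_{j+1} = t_j - t_j^{1-1/k} and corresponding n_j) it holds that S(n,t) ≤ (n - t)·q(t) + t^{1+1/k}. -/
/-!
Along the recursion the quantity `n - t` is invariant, and one step of it adds `n` to `S` and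
`1` to `q`. The bound therefore propagates backwards from `t = 1` as soon as
`(t - t^{1-c})^{1+c} ≤ t^{1+c} - t`, where `c = 1/k`. Writing `t - t^{1-c} = x t` with
`x = 1 - t^{-c} ∈ [0, 1]`, this is `(x t)^{1+c} = x^{1+c} t^{1+c} ≤ x t^{1+c} = t^{1+c} - t`.
-/

open Real

lemma rpow_sub_rpow_one_sub_le {c t : ℝ} (hc : 0 ≤ c) (ht : 1 ≤ t) :
    (t - t ^ (1 - c)) ^ (1 + c) ≤ t ^ (1 + c) - t := by
  have ht0 : 0 < t := by linarith
  set x := 1 - t ^ (-c) with hx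
  have hx0 : 0 ≤ x := sub_nonneg.2 (rpow_le_one_of_one_le_of_nonpos ht (neg_nonpos.2 hc))
  have hx1 : x ≤ 1 := sub_le_self _ (rpow_nonneg ht0.le _)
  have hsplit : t - t ^ (1 - c) = x * t := by
    rw [sub_eq_add_neg 1 c, rpow_add ht0, rpow_one, hx]
    ring
  have hcancel : t ^ (1 + c) * t ^ (-c) = t := by
    rw [← rpow_add ht0]
    norm_num
  calc (t - t ^ (1 - c)) ^ (1 + c) = x ^ (1 + c) * t ^ (1 + c) := by
        rw [hsplit, mul_rpow hx0 ht0.le]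
    _ ≤ x * t ^ (1 + c) := by
        gcongr
        exact rpow_le_self_of_le_one hx0 hx1 (by linarith)
    _ = t ^ (1 + c) - t := by rw [hx, sub_mul, one_mul, mul_comm, hcancel]

theorem le_sub_mul_add_rpow_of_recursion {c : ℝ} (hc : 0 ≤ c) (m : ℕ) (t n q S : ℕ → ℝ)
    (htm : t m = 1) (hqm : q m = 1) (hSm : S m = n m)
    (hstep : ∀ j < m, 1 < t j ∧
      t (j + 1) = t j - t j ^ (1 - c) ∧
      n (j + 1) = n j - t j ^ (1 - c) ∧
      q j = 1 + q (j + 1) ∧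
      S j = n j + S (j + 1)) {j : ℕ} (hj : j ≤ m) :
    S j ≤ (n j - t j) * q j + t j ^ (1 + c) := by
  induction hj using Nat.decreasingInduction with
  | self => simp [htm, hqm, hSm]
  | of_succ j hj ih =>
    obtain ⟨ht, htj, hnj, hqj, hSj⟩ := hstep j hj
    have hgap : n (j + 1) - t (j + 1) = n j - t j := by rw [htj, hnj]; ring
    have hpow := rpow_sub_rpow_one_sub_le hc ht.le
    rw [← htj] at hpow
    rw [hgap] at ih
    rw [hSj, hqj]
    linarith

theorem size_recursion_bound_general (k : ℕ) (m : ℕ) (t n q S : ℕ → ℝ)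
    (htm : t m = 1) (hqm : q m = 1) (hSm : S m = n m)
    (hstep : ∀ j < m, 1 < t j ∧
      t (j + 1) = t j - t j ^ (1 - 1 / (k : ℝ)) ∧
      n (j + 1) = n j - t j ^ (1 - 1 / (k : ℝ)) ∧
      q j = 1 + q (j + 1) ∧
      S j = n j + S (j + 1)) :
    S 0 ≤ (n 0 - t 0) * q 0 + t 0 ^ (1 + 1 / (k : ℝ)) :=
  le_sub_mul_add_rpow_of_recursion (by positivity) m t n q S htm hqm hSm hstep (Nat.zero_le m)

theorem size_recursion_bound (k : ℕ) (hk : 1 ≤ k) (m : ℕ) (t n q S : ℕ → ℝ)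
    (htm : t m = 1) (hqm : q m = 1) (hSm : S m = n m)
    (hstep : ∀ j < m, 1 < t j ∧
      t (j + 1) = t j - t j ^ (1 - 1 / (k : ℝ)) ∧
      n (j + 1) = n j - t j ^ (1 - 1 / (k : ℝ)) ∧
      q j = 1 + q (j + 1) ∧
      S j = n j + S (j + 1))
    (hnt : ∀ j ≤ m, t j ≤ n j) (ht1 : ∀ j ≤ m, 1 ≤ t j) :
    S 0 ≤ (n 0 - t 0) * q 0 + t 0 ^ (1 + 1 / (k : ℝ)) :=
  size_recursion_bound_general k m t n q S htm hqm hSm hstep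
end

section
/- Let (X,d) be a finite metric space, α ≥ 1, and Y a nonempty subset of X equipped with an ultrametric ρ satisfying d(x,y) ≤ ρ(x,y) ≤ α·d(x,y) for all x,y ∈ Y. For each x ∈ X let s(x) ∈ Y be a point of Y minimizing d(x, ·). Define T to be the graph on X consisting of a tree on Y realizing distances d_T with d(u,v) ≤ d_T(u,v) ≤ 8α·d(u,v) on Y, together with an edge from each x ∈ X∖Y to s(x) of weight d(x, s(x)). Then for all u, v ∈ X: d(u,v) ≤ d_T(u,v), and if u ∈ Y then d_T(u,v) ≤ (16α + 1)·d(u,v). -/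
/-!
Every point `v` sits at distance at most `d(v, u)` from its retraction `σ v ∈ Y` whenever `u ∈ Y`,
so the tree path from `u ∈ Y` to `v` is a tree path between two points of `Y` at distance at most
`2 d(u, v)`, followed by one edge of length at most `d(u, v)`. The lower bound is the triangle
inequality along the path `u, σ u, σ v, v`.
-/

section NearestPointRetraction

variable {X : Type*} {Y : Set X} {s σ : X → X}

lemma retraction_mem (hs_mem : ∀ x, s x ∈ Y) (hσ_in : ∀ x ∈ Y, σ x = x)
    (hσ_out : ∀ x ∉ Y, σ x = s x) (x : X) : σ x ∈ Y := by
  by_cases hx : x ∈ Y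
  · rwa [hσ_in x hx]
  · rw [hσ_out x hx]
    exact hs_mem x

lemma dist_retraction_le [PseudoMetricSpace X] (hs_min : ∀ x, ∀ y ∈ Y, dist x (s x) ≤ dist x y)
    (hσ_in : ∀ x ∈ Y, σ x = x) (hσ_out : ∀ x ∉ Y, σ x = s x) (x : X) {y : X} (hy : y ∈ Y) :
    dist x (σ x) ≤ dist x y := by
  by_cases hx : x ∈ Y
  · rw [hσ_in x hx, dist_self]
    exact dist_nonneg
  · rw [hσ_out x hx]
    exact hs_min x y hy

end NearestPointRetraction

lemma add_dist_le_of_dist_le_dist {X : Type*} [PseudoMetricSpace X] {C D : ℝ} (hC : 0 ≤ C)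
    {u v w : X} (hw : dist v w ≤ dist v u) (hD : D ≤ C * dist u w) :
    D + dist w v ≤ (2 * C + 1) * dist u v := by
  have huw : dist u w ≤ 2 * dist u v := by
    linarith [dist_triangle u v w, dist_comm v u]
  calc D + dist w v ≤ C * (2 * dist u v) + dist u v := by
        gcongr
        · exact hD.trans (mul_le_mul_of_nonneg_left huw hC)
        · exact (dist_comm w v).trans_le (hw.trans_eq (dist_comm v u))
    _ = (2 * C + 1) * dist u v := by ring

theorem tree_extension_stretch_general
    {X : Type*} [MetricSpace X]
    (Y : Set X) (α : ℝ) (hα : 1 ≤ α)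
    (s : X → X)
    (hs_mem : ∀ x, s x ∈ Y)
    (hs_min : ∀ x, ∀ y ∈ Y, dist x (s x) ≤ dist x y)
    (dT0 : X → X → ℝ)
    (hT0_lb : ∀ u ∈ Y, ∀ v ∈ Y, dist u v ≤ dT0 u v)
    (hT0_ub : ∀ u ∈ Y, ∀ v ∈ Y, dT0 u v ≤ 8 * α * dist u v)
    (σ : X → X)
    (hσ_in : ∀ x ∈ Y, σ x = x) (hσ_out : ∀ x ∉ Y, σ x = s x)
    (dT : X → X → ℝ)
    (hdT : ∀ u v, dT u v = dist u (σ u) + dT0 (σ u) (σ v) + dist (σ v) v) :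
    ∀ u v : X, dist u v ≤ dT u v ∧ (u ∈ Y → dT u v ≤ (16 * α + 1) * dist u v) := by
  have hσY := retraction_mem hs_mem hσ_in hσ_out
  intro u v
  refine ⟨?_, fun hu => ?_⟩
  · rw [hdT]
    calc dist u v ≤ dist u (σ u) + dist (σ u) (σ v) + dist (σ v) v := dist_triangle4 _ _ _ _
      _ ≤ _ := by gcongr; exact hT0_lb _ (hσY u) _ (hσY v)
  · rw [hdT, hσ_in u hu, dist_self, zero_add]
    calc dT0 u (σ v) + dist (σ v) v ≤ (2 * (8 * α) + 1) * dist u v :=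
          add_dist_le_of_dist_le_dist (by linarith) (dist_retraction_le hs_min hσ_in hσ_out v hu)
            (hT0_ub u hu (σ v) (hσY v))
      _ = (16 * α + 1) * dist u v := by ring

/-- extending a tree metric on a Ramsey subset `Y` to all of `X`
by attaching each `x ∉ Y` to its nearest point `s x ∈ Y`. -/
theorem tree_extension_stretch
    {X : Type*} [MetricSpace X] [Fintype X]
    (Y : Set X) (hY : Y.Nonempty) (α : ℝ) (hα : 1 ≤ α)
    (ρ : X → X → ℝ)
    (hρ_ultra : ∀ x ∈ Y, ∀ y ∈ Y, ∀ z ∈ Y, ρ x z ≤ max (ρ x y) (ρ y z))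
    (hρ_lb : ∀ x ∈ Y, ∀ y ∈ Y, dist x y ≤ ρ x y)
    (hρ_ub : ∀ x ∈ Y, ∀ y ∈ Y, ρ x y ≤ α * dist x y)
    (s : X → X)
    (hs_mem : ∀ x, s x ∈ Y)
    (hs_min : ∀ x, ∀ y ∈ Y, dist x (s x) ≤ dist x y)
    (dT0 : X → X → ℝ)
    (hT0_lb : ∀ u ∈ Y, ∀ v ∈ Y, dist u v ≤ dT0 u v)
    (hT0_ub : ∀ u ∈ Y, ∀ v ∈ Y, dT0 u v ≤ 8 * α * dist u v)
    (σ : X → X)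
    (hσ_in : ∀ x ∈ Y, σ x = x) (hσ_out : ∀ x ∉ Y, σ x = s x)
    (dT : X → X → ℝ)
    (hdT : ∀ u v, dT u v = dist u (σ u) + dT0 (σ u) (σ v) + dist (σ v) v) :
    ∀ u v : X, dist u v ≤ dT u v ∧ (u ∈ Y → dT u v ≤ (16 * α + 1) * dist u v) :=
  tree_extension_stretch_general Y α hα s hs_mem hs_min dT0 hT0_lb hT0_ub σ hσ_in hσ_out dT hdT
end

section
/- Let (X,d) be a metric space, S ⊆ X, k ≥ 1 a real, and ρ an ultrametric on S with d(a,b) ≤ ρ(a,b) ≤ (8k−2)·d(a,b) for all a,b ∈ S. Suppose u, v ∈ X and z ∈ S lies on a geodesic between u and v (d(u,z)+d(z,v)=d(u,v)), and let s_u, s_v ∈ S minimize d(u,·) and d(v,·) over S. Define D̂ = d(u,s_u) + ρ(s_u,s_v) + d(s_v,v). Then d(u,v) ≤ D̂ ≤ (16k−3)·d(u,v). -/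
section NearestPoints

variable {X : Type*} [PseudoMetricSpace X] {S : Set X} {u v z su sv : X}

theorem dist_nearest_add_dist_nearest_le (hz : z ∈ S)
    (hgeo : dist u z + dist z v = dist u v)
    (hsu_min : ∀ y ∈ S, dist u su ≤ dist u y) (hsv_min : ∀ y ∈ S, dist v sv ≤ dist v y) :
    dist u su + dist sv v ≤ dist u v := by
  have hsv : dist sv v ≤ dist z v := by simpa only [dist_comm v] using hsv_min z hz
  linarith [hsu_min z hz]

theorem dist_nearest_nearest_le_two_mul (hz : z ∈ S)
    (hgeo : dist u z + dist z v = dist u v)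
    (hsu_min : ∀ y ∈ S, dist u su ≤ dist u y) (hsv_min : ∀ y ∈ S, dist v sv ≤ dist v y) :
    dist su sv ≤ 2 * dist u v := by
  have hnear := dist_nearest_add_dist_nearest_le hz hgeo hsu_min hsv_min
  calc dist su sv ≤ dist su u + dist u v + dist v sv := dist_triangle4 su u v sv
    _ = dist u su + dist sv v + dist u v := by rw [dist_comm su u, dist_comm v sv]; ring
    _ ≤ 2 * dist u v := by linarith

end NearestPoints

theorem pairwise_oracle_stretch_general
    {X : Type*} [MetricSpace X] (S : Set X) (k : ℝ) (hk : 1 ≤ k)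
    (ρ : X → X → ℝ)
    (hρ_lb : ∀ a ∈ S, ∀ b ∈ S, dist a b ≤ ρ a b)
    (hρ_ub : ∀ a ∈ S, ∀ b ∈ S, ρ a b ≤ (8 * k - 2) * dist a b)
    (u v z : X) (hz : z ∈ S) (hgeo : dist u z + dist z v = dist u v)
    (su sv : X) (hsu : su ∈ S) (hsv : sv ∈ S)
    (hsu_min : ∀ y ∈ S, dist u su ≤ dist u y)
    (hsv_min : ∀ y ∈ S, dist v sv ≤ dist v y) :
    dist u v ≤ dist u su + ρ su sv + dist sv v ∧
      dist u su + ρ su sv + dist sv v ≤ (16 * k - 3) * dist u v := by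
  constructor
  · calc dist u v ≤ dist u su + dist su sv + dist sv v := dist_triangle4 u su sv v
      _ ≤ dist u su + ρ su sv + dist sv v := by gcongr; exact hρ_lb su hsu sv hsv
  · have hρ : ρ su sv ≤ (8 * k - 2) * (2 * dist u v) :=
      (hρ_ub su hsu sv hsv).trans <| mul_le_mul_of_nonneg_left
        (dist_nearest_nearest_le_two_mul hz hgeo hsu_min hsv_min) (by linarith)
    linarith [dist_nearest_add_dist_nearest_le hz hgeo hsu_min hsv_min]

theorem pairwise_oracle_stretch
    {X : Type*} [MetricSpace X] (S : Set X) (k : ℝ) (hk : 1 ≤ k)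
    (ρ : X → X → ℝ)
    (hρ_ultra : ∀ a ∈ S, ∀ b ∈ S, ∀ c ∈ S, ρ a c ≤ max (ρ a b) (ρ b c))
    (hρ_lb : ∀ a ∈ S, ∀ b ∈ S, dist a b ≤ ρ a b)
    (hρ_ub : ∀ a ∈ S, ∀ b ∈ S, ρ a b ≤ (8 * k - 2) * dist a b)
    (u v z : X) (hz : z ∈ S) (hgeo : dist u z + dist z v = dist u v)
    (su sv : X) (hsu : su ∈ S) (hsv : sv ∈ S)
    (hsu_min : ∀ y ∈ S, dist u su ≤ dist u y)
    (hsv_min : ∀ y ∈ S, dist v sv ≤ dist v y) :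
    dist u v ≤ dist u su + ρ su sv + dist sv v ∧
      dist u su + ρ su sv + dist sv v ≤ (16 * k - 3) * dist u v :=
  pairwise_oracle_stretch_general S k hk ρ hρ_lb hρ_ub u v z hz hgeo su sv hsu hsv hsu_min hsv_min
end

section
/- Let k ≥ 1 be a real number and suppose a tree metric d_T on a set S satisfies d ≤ d_T ≤ (64k − 16)·d on S (obtained by applying an 8-approximation to an ultrametric with distortion 8k − 2). Extend T by attaching each x ∉ S to its nearest point s_x ∈ S with an edge of weight d(x, s_x). Then for every u ∈ S and every v in the extended vertex set, d_T(u,v) ≤ (64k−16)·(d(u,v) + d(v,s_v)) + d(s_v,v) ≤ (128k − 31)·d(u,v). -/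
/-!
Since `s v` is a point of `S` nearest to `v` and `u ∈ S`, the pendant edge satisfies
`d(v, s v) ≤ d(u, v)`. The extended tree distance is `d_T(u, s v) + d(s v, v)`, and
`d_T(u, s v) ≤ c · d(u, s v) ≤ c · (d(u, v) + d(v, s v))` by the triangle inequality. Bounding both
occurrences of the pendant edge by `d(u, v)` gives stretch `2c + 1`, i.e. `128k - 31` for
`c = 64k - 16`.
-/

section NearestPoint

variable {X : Type*} [PseudoMetricSpace X] {S : Set X} {s : X → X}

theorem dist_nearest_le_dist (hs_min : ∀ v, ∀ y ∈ S, dist v (s v) ≤ dist v y)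
    {u : X} (hu : u ∈ S) (v : X) : dist v (s v) ≤ dist u v :=
  (hs_min v u hu).trans_eq (dist_comm v u)

variable {dT0 : X → X → ℝ} {c : ℝ}

theorem attach_nearest_le_mul_add (hc : 0 ≤ c)
    (hT0_ub : ∀ a ∈ S, ∀ b ∈ S, dT0 a b ≤ c * dist a b) (hs_mem : ∀ v, s v ∈ S)
    {u : X} (hu : u ∈ S) (v : X) :
    dT0 u (s v) + dist (s v) v ≤ c * (dist u v + dist v (s v)) + dist (s v) v := by
  have h_tree : dT0 u (s v) ≤ c * dist u (s v) := hT0_ub u hu (s v) (hs_mem v)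
  have h_tri := mul_le_mul_of_nonneg_left (dist_triangle u v (s v)) hc
  linarith

theorem attach_nearest_le_two_mul_add_one (hc : 0 ≤ c)
    (hT0_ub : ∀ a ∈ S, ∀ b ∈ S, dT0 a b ≤ c * dist a b) (hs_mem : ∀ v, s v ∈ S)
    (hs_min : ∀ v, ∀ y ∈ S, dist v (s v) ≤ dist v y) {u : X} (hu : u ∈ S) (v : X) :
    dT0 u (s v) + dist (s v) v ≤ (2 * c + 1) * dist u v := by
  have h_pendant := dist_nearest_le_dist hs_min hu v
  have h_scaled := mul_le_mul_of_nonneg_left h_pendant hc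
  have h_bound := attach_nearest_le_mul_add hc hT0_ub hs_mem hu v
  rw [dist_comm (s v) v] at h_bound ⊢
  linarith

end NearestPoint

theorem extended_tree_stretch_general
    {X : Type*} [MetricSpace X]
    (S : Set X) (k : ℝ) (hk : 1 ≤ k)
    (dT0 : X → X → ℝ)
    (hT0_ub : ∀ a ∈ S, ∀ b ∈ S, dT0 a b ≤ (64 * k - 16) * dist a b)
    (s : X → X)
    (hs_mem : ∀ v, s v ∈ S)
    (hs_min : ∀ v, ∀ y ∈ S, dist v (s v) ≤ dist v y)
    (dT : X → X → ℝ)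
    (hdT : ∀ u ∈ S, ∀ v : X, dT u v = dT0 u (s v) + dist (s v) v) :
    ∀ u ∈ S, ∀ v : X,
      dT u v ≤ (64 * k - 16) * (dist u v + dist v (s v)) + dist (s v) v ∧
        dT u v ≤ (128 * k - 31) * dist u v := by
  intro u hu v
  have hc : (0 : ℝ) ≤ 64 * k - 16 := by linarith
  rw [hdT u hu v, show (128 * k - 31 : ℝ) = 2 * (64 * k - 16) + 1 by ring]
  exact ⟨attach_nearest_le_mul_add hc hT0_ub hs_mem hu v,
    attach_nearest_le_two_mul_add_one hc hT0_ub hs_mem hs_min hu v⟩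

/-- extending a `(64k-16)`-approximate tree metric on `S` by
attaching each point to its nearest point of `S` gives stretch `128k - 31`. -/
theorem extended_tree_stretch
    {X : Type*} [MetricSpace X] [Fintype X]
    (S : Set X) (k : ℝ) (hk : 1 ≤ k)
    (dT0 : X → X → ℝ)
    (hT0_lb : ∀ a ∈ S, ∀ b ∈ S, dist a b ≤ dT0 a b)
    (hT0_ub : ∀ a ∈ S, ∀ b ∈ S, dT0 a b ≤ (64 * k - 16) * dist a b)
    (s : X → X)
    (hs_mem : ∀ v, s v ∈ S)
    (hs_min : ∀ v, ∀ y ∈ S, dist v (s v) ≤ dist v y)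
    (dT : X → X → ℝ)
    (hdT : ∀ u ∈ S, ∀ v : X, dT u v = dT0 u (s v) + dist (s v) v) :
    ∀ u ∈ S, ∀ v : X,
      dT u v ≤ (64 * k - 16) * (dist u v + dist v (s v)) + dist (s v) v ∧
        dT u v ≤ (128 * k - 31) * dist u v :=
  extended_tree_stretch_general S k hk dT0 hT0_ub s hs_mem hs_min dT hdT
end
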